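/- arXiv:1706.04594 — 7 statements merged into one kernel-verified Lean document; each statement's English description precedes it below -/
import Mathlib

section
/- Let a < b be real numbers and 1 < α < 2. Let g : ℝ → ℝ be continuously differentiable on [a,b] and suppose g attains its global maximum over [a,b] at a point ξ ∈ (a,b). If the conformable derivative of g of order α at ξ exists, i.e. there is a real number L such that (g'(ξ + ε·(ξ−a)^{2−α}) − g'(ξ))/ε tends to L as ε → 0 (ε ≠ 0), then L ≤ 0. -/
open Set Filter Topology

/-! With `c = (ξ - a) ^ (2 - α) > 0`, the conformable quotient is `c` times the difference
quotient of `g'` at `ξ` with step `ε c`, so its limit `L` means `g''(ξ) = L / c`. At an interior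
maximum `g''(ξ) ≤ 0`: otherwise, since `g'(ξ) = 0`, the second-derivative test makes `ξ` also a
local minimum, so `g` is locally constant and `g''(ξ) = 0`. -/

theorem hasDerivAt_of_tendsto_dilated_slope {f : ℝ → ℝ} {x c L : ℝ} (hc : c ≠ 0)
    (h : Tendsto (fun ε => (f (x + ε * c) - f x) / ε) (𝓝[≠] 0) (𝓝 L)) :
    HasDerivAt f (L / c) x := by
  have hdiv : Tendsto (fun t : ℝ => t / c) (𝓝[≠] 0) (𝓝[≠] 0) := by
    refine tendsto_nhdsWithin_of_tendsto_nhds_of_eventually_within _ ?_ ?_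
    · simpa using ((continuous_id.div_const c).tendsto 0).mono_left nhdsWithin_le_nhds
    · filter_upwards [self_mem_nhdsWithin] with t ht using div_ne_zero ht hc
  rw [hasDerivAt_iff_tendsto_slope_zero]
  refine ((h.comp hdiv).div_const c).congr fun t => ?_
  simp only [Function.comp_apply, div_mul_cancel₀ t hc, smul_eq_mul]
  field_simp

theorem deriv_deriv_nonpos_of_isLocalMax {f : ℝ → ℝ} {x : ℝ} (hmax : IsLocalMax f x)
    (hcont : ContinuousAt f x) : deriv (deriv f) x ≤ 0 := by
  by_contra! hpos
  have hmin : IsLocalMin f x := isLocalMin_of_deriv_deriv_pos hpos hmax.deriv_eq_zero hcont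
  have hconst : f =ᶠ[𝓝 x] fun _ => f x :=
    (hmax.and hmin).mono fun _ h => le_antisymm h.1 h.2
  have : deriv (deriv f) x = 0 := by
    simpa using hconst.deriv.deriv_eq
  exact hpos.ne' this

theorem conformable_deriv_nonpos_at_interior_max_general
    (a b α : ℝ)
    (g : ℝ → ℝ) (hg : ContDiffOn ℝ 1 g (Set.Icc a b))
    (ξ : ℝ) (hξ : ξ ∈ Set.Ioo a b)
    (hmax : ∀ t ∈ Set.Icc a b, g t ≤ g ξ)
    (L : ℝ)
    (hL : Tendsto (fun ε : ℝ =>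
        (deriv g (ξ + ε * (ξ - a) ^ ((2 : ℝ) - α)) - deriv g ξ) / ε)
      (𝓝[≠] (0 : ℝ)) (𝓝 L)) :
    L ≤ 0 := by
  have hIcc : Icc a b ∈ 𝓝 ξ := Icc_mem_nhds hξ.1 hξ.2
  have hc : 0 < (ξ - a) ^ ((2 : ℝ) - α) := Real.rpow_pos_of_pos (sub_pos.2 hξ.1) _
  have hsecond : deriv (deriv g) ξ ≤ 0 :=
    deriv_deriv_nonpos_of_isLocalMax (IsMaxOn.isLocalMax hmax hIcc)
      (hg.continuousOn.continuousAt hIcc)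
  rw [(hasDerivAt_of_tendsto_dilated_slope hc.ne' hL).deriv] at hsecond
  simpa using (div_le_iff₀ hc).1 hsecond

/-- Conformable-derivative analogue of the first-derivative test at an interior
global maximum: if `g` is `C¹` on `[a, b]`, attains its global maximum over `[a, b]`
at `ξ ∈ (a, b)`, and the conformable derivative of order `α` (`1 < α < 2`, base
point `a`) of `g` at `ξ` exists with value `L`, then `L ≤ 0`. -/
theorem conformable_deriv_nonpos_at_interior_max
    (a b α : ℝ) (hab : a < b) (hα1 : 1 < α) (hα2 : α < 2)
    (g : ℝ → ℝ) (hg : ContDiffOn ℝ 1 g (Set.Icc a b))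
    (ξ : ℝ) (hξ : ξ ∈ Set.Ioo a b)
    (hmax : ∀ t ∈ Set.Icc a b, g t ≤ g ξ)
    (L : ℝ)
    (hL : Tendsto (fun ε : ℝ =>
        (deriv g (ξ + ε * (ξ - a) ^ ((2 : ℝ) - α)) - deriv g ξ) / ε)
      (𝓝[≠] (0 : ℝ)) (𝓝 L)) :
    L ≤ 0 :=
  conformable_deriv_nonpos_at_interior_max_general a b α g hg ξ hξ hmax L hL
end

section
/- Let a < b be real numbers and 1 < α < 2. Let g : ℝ → ℝ be continuously differentiable on [a,b] and suppose g attains its global minimum over [a,b] at a point ξ ∈ (a,b). If the conformable derivative of g of order α at ξ exists, i.e. there is a real number L such that (g'(ξ + ε·(ξ−a)^{2−α}) − g'(ξ))/ε tends to L as ε → 0 (ε ≠ 0), then L ≥ 0. -/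
open Set Filter Topology

/-! If `L < 0`, then, since `g' ξ = 0` at the interior minimum, the conformable difference
quotient forces `g' < 0` on a right neighbourhood of `ξ`; so `g` strictly decreases just to the
right of `ξ`, contradicting minimality. -/

lemma tendsto_sub_div_nhdsGT {x c : ℝ} (hc : 0 < c) :
    Tendsto (fun t => (t - x) / c) (𝓝[>] x) (𝓝[>] 0) := by
  refine tendsto_nhdsWithin_of_tendsto_nhds_of_eventually_within _ ?_ ?_
  · simpa using ((tendsto_id.sub_const x).div_const c).mono_left (nhdsWithin_le_nhds (a := x))
  · filter_upwards [self_mem_nhdsWithin] with t ht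
    exact div_pos (sub_pos.2 ht) hc

lemma eventually_nhdsGT_neg_of_tendsto_div {f : ℝ → ℝ} {x c L : ℝ} (hc : 0 < c) (hL0 : L < 0)
    (hL : Tendsto (fun ε => f (x + ε * c) / ε) (𝓝[≠] 0) (𝓝 L)) :
    ∀ᶠ t in 𝓝[>] x, f t < 0 := by
  have hquot : ∀ᶠ ε in 𝓝[>] 0, f (x + ε * c) / ε < 0 :=
    (hL.mono_left (nhdsWithin_mono _ fun _ hε => ne_of_gt hε)).eventually (gt_mem_nhds hL0)
  have hval : ∀ᶠ ε in 𝓝[>] (0 : ℝ), f (x + ε * c) < 0 := by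
    filter_upwards [hquot, self_mem_nhdsWithin] with ε hε hpos
    exact ((div_neg_iff.1 hε).resolve_left fun h => lt_asymm hpos h.2).1
  filter_upwards [(tendsto_sub_div_nhdsGT hc).eventually hval] with t ht
  rwa [div_mul_cancel₀ _ hc.ne', add_sub_cancel] at ht

lemma exists_lt_of_eventually_deriv_neg {g : ℝ → ℝ} {x y : ℝ} (hxy : x < y)
    (hg : ContinuousOn g (Icc x y)) (hd : ∀ᶠ t in 𝓝[>] x, deriv g t < 0) :
    ∃ t ∈ Ioc x y, g t < g x := by
  obtain ⟨z, hxz, hsub⟩ := (mem_nhdsGT_iff_exists_Ioo_subset' hxy).1 hd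
  have hxw : x < min z y := lt_min hxz hxy
  have hanti : StrictAntiOn g (Icc x (min z y)) := by
    refine strictAntiOn_of_deriv_neg (convex_Icc _ _)
      (hg.mono (Icc_subset_Icc_right (min_le_right _ _))) fun t ht => ?_
    rw [interior_Icc] at ht
    exact hsub ⟨ht.1, ht.2.trans_le (min_le_left _ _)⟩
  exact ⟨min z y, ⟨hxw, min_le_right _ _⟩,
    hanti (left_mem_Icc.2 hxw.le) (right_mem_Icc.2 hxw.le) hxw⟩

theorem conformable_deriv_nonneg_at_interior_min_general
    (a b α : ℝ)
    (g : ℝ → ℝ) (hg : ContDiffOn ℝ 1 g (Set.Icc a b))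
    (ξ : ℝ) (hξ : ξ ∈ Set.Ioo a b)
    (hmin : ∀ t ∈ Set.Icc a b, g ξ ≤ g t)
    (L : ℝ)
    (hL : Tendsto (fun ε : ℝ =>
        (deriv g (ξ + ε * (ξ - a) ^ ((2 : ℝ) - α)) - deriv g ξ) / ε)
      (𝓝[≠] (0 : ℝ)) (𝓝 L)) :
    0 ≤ L := by
  have hc : 0 < (ξ - a) ^ ((2 : ℝ) - α) := Real.rpow_pos_of_pos (sub_pos.2 hξ.1) _
  have hlocmin : IsLocalMin g ξ := eventually_of_mem (Icc_mem_nhds hξ.1 hξ.2) hmin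
  rw [hlocmin.deriv_eq_zero] at hL
  simp only [sub_zero] at hL
  by_contra! hL0
  obtain ⟨t, ht, hlt⟩ := exists_lt_of_eventually_deriv_neg hξ.2
    (hg.continuousOn.mono (Icc_subset_Icc_left hξ.1.le))
    (eventually_nhdsGT_neg_of_tendsto_div hc hL0 hL)
  exact (hmin t ⟨hξ.1.le.trans ht.1.le, ht.2⟩).not_gt hlt

/-- Conformable-derivative analogue of the first-derivative test at an interior
global minimum: if `g` is `C¹` on `[a, b]`, attains its global minimum over `[a, b]`
at `ξ ∈ (a, b)`, and the conformable derivative of order `α` (`1 < α < 2`, base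
point `a`) of `g` at `ξ` exists with value `L`, then `L ≥ 0`. -/
theorem conformable_deriv_nonneg_at_interior_min
    (a b α : ℝ) (hab : a < b) (hα1 : 1 < α) (hα2 : α < 2)
    (g : ℝ → ℝ) (hg : ContDiffOn ℝ 1 g (Set.Icc a b))
    (ξ : ℝ) (hξ : ξ ∈ Set.Ioo a b)
    (hmin : ∀ t ∈ Set.Icc a b, g ξ ≤ g t)
    (L : ℝ)
    (hL : Tendsto (fun ε : ℝ =>
        (deriv g (ξ + ε * (ξ - a) ^ ((2 : ℝ) - α)) - deriv g ξ) / ε)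
      (𝓝[≠] (0 : ℝ)) (𝓝 L)) :
    0 ≤ L :=
  conformable_deriv_nonneg_at_interior_min_general a b α g hg ξ hξ hmin L hL
end

section
/- Let a < b be real numbers, 1 < α < 2, and let y : [a,b] → ℝ be continuous. Define u(t) = ∫_a^b G(t,s)·y(s)·(s−a)^{α−2} ds for t ∈ [a,b], where G is the Green function G(t,s) = (1/(b−a))·(−(b−a)(t−s) + (b−s)(t−a)) for a ≤ s ≤ t ≤ b and G(t,s) = (1/(b−a))·(b−s)(t−a) for a ≤ t < s ≤ b. Then u(a) = 0, u(b) = 0, and for every t ∈ (a,b) the second derivative u''(t) exists and satisfies (t−a)^{2−α}·u''(t) + y(t) = 0. -/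
open Set Filter Topology MeasureTheory intervalIntegral

/-!
The Green function is `G(t,s) = (t-a)(b-s)/(b-a) - (t-s)⁺`, so with `f(s) = y(s) (s-a)^(α-2)`
the function `u` is the affine function `t ↦ (t-a)/(b-a) ∫_a^b (b-s) f(s) ds`, which agrees
with `∫_a^t (t-s) f(s) ds` at `t = a` and `t = b`, minus that integral. Since `α - 2 > -1`, `f`
is integrable on `[a, b]`, and it is continuous on `(a, b)`, so two applications of the
fundamental theorem of calculus give `u'' = -f` there; multiplying by `(t-a)^(2-α)` cancels
the weight.
-/

noncomputable def greenFun (a b t s : ℝ) : ℝ :=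
  (t - a) / (b - a) * (b - s) - max (t - s) 0

theorem eq_greenFun {a b : ℝ} (hab : a ≠ b) {G : ℝ → ℝ → ℝ}
    (hG1 : ∀ t s : ℝ, s ≤ t →
      G t s = (1 / (b - a)) * (-(b - a) * (t - s) + (b - s) * (t - a)))
    (hG2 : ∀ t s : ℝ, t < s → G t s = (1 / (b - a)) * ((b - s) * (t - a))) :
    G = greenFun a b := by
  have hba : b - a ≠ 0 := sub_ne_zero.mpr hab.symm
  funext t s
  rcases le_or_gt s t with hst | hts
  · rw [hG1 t s hst, greenFun, max_eq_left (sub_nonneg.mpr hst)]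
    field_simp
    ring
  · rw [hG2 t s hts, greenFun, max_eq_right (sub_nonpos.mpr hts.le)]
    field_simp
    ring

theorem intervalIntegrable_mul_rpow_sub {y : ℝ → ℝ} {a b r : ℝ} (hab : a ≤ b)
    (hy : ContinuousOn y (Icc a b)) (hr : -1 < r) :
    IntervalIntegrable (fun s => y s * (s - a) ^ r) volume a b := by
  have hpow : IntervalIntegrable (fun s => (s - a) ^ r) volume a b := by
    simpa using (intervalIntegrable_rpow' hr (a := 0) (b := b - a)).comp_sub_right a
  exact hpow.continuousOn_mul (by rwa [uIcc_of_le hab])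

section

variable {f : ℝ → ℝ} {a b : ℝ}

theorem integral_max_sub_zero_mul (hf : IntervalIntegrable f volume a b) {t : ℝ}
    (ht : t ∈ Icc a b) :
    ∫ s in a..b, max (t - s) 0 * f s = ∫ s in a..t, (t - s) * f s := by
  have hint : IntervalIntegrable (fun s => max (t - s) 0 * f s) volume a b :=
    hf.continuousOn_mul (by fun_prop)
  have ht' : t ∈ uIcc a b := Icc_subset_uIcc ht
  rw [← integral_add_adjacent_intervals (hint.mono_set (uIcc_subset_uIcc left_mem_uIcc ht'))
    (hint.mono_set (uIcc_subset_uIcc ht' right_mem_uIcc))]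
  have hright : ∫ s in t..b, max (t - s) 0 * f s = 0 := by
    rw [← integral_zero (a := t) (b := b) (μ := volume)]
    refine integral_congr fun s hs => ?_
    rw [uIcc_of_le ht.2] at hs
    simp [max_eq_right (sub_nonpos.mpr hs.1)]
  rw [hright, add_zero]
  refine integral_congr fun s hs => ?_
  rw [uIcc_of_le ht.1] at hs
  simp only [max_eq_left (sub_nonneg.mpr hs.2)]

theorem integral_greenFun_mul (hf : IntervalIntegrable f volume a b) {t : ℝ}
    (ht : t ∈ Icc a b) :
    ∫ s in a..b, greenFun a b t s * f s =
      (∫ s in a..b, (b - s) * f s) / (b - a) * (t - a) - ∫ s in a..t, (t - s) * f s := by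
  have hlin : IntervalIntegrable (fun s => (b - s) * f s) volume a b :=
    hf.continuousOn_mul (by fun_prop)
  have hmax : IntervalIntegrable (fun s => max (t - s) 0 * f s) volume a b :=
    hf.continuousOn_mul (by fun_prop)
  have hsplit : ∀ s, greenFun a b t s * f s =
      (t - a) / (b - a) * ((b - s) * f s) - max (t - s) 0 * f s := fun s => by
    rw [greenFun]
    ring
  simp only [hsplit]
  rw [integral_sub (hlin.const_mul _) hmax, intervalIntegral.integral_const_mul,
    integral_max_sub_zero_mul hf ht]
  ring

theorem hasDerivAt_integral_of_continuousOn_Ioo (hf : IntervalIntegrable f volume a b)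
    (hcont : ContinuousOn f (Ioo a b)) {x : ℝ} (hx : x ∈ Ioo a b) :
    HasDerivAt (fun t => ∫ s in a..t, f s) (f x) x :=
  integral_hasDerivAt_right
    (hf.mono_set (uIcc_subset_uIcc left_mem_uIcc (Icc_subset_uIcc (Ioo_subset_Icc_self hx))))
    (hcont.stronglyMeasurableAtFilter isOpen_Ioo x hx)
    (hcont.continuousAt (Ioo_mem_nhds hx.1 hx.2))

theorem hasDerivAt_integral_sub_mul (hf : IntervalIntegrable f volume a b)
    (hcont : ContinuousOn f (Ioo a b)) {x : ℝ} (hx : x ∈ Ioo a b) :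
    HasDerivAt (fun t => ∫ s in a..t, (t - s) * f s) (∫ s in a..x, f s) x := by
  have hA := hasDerivAt_integral_of_continuousOn_Ioo hf hcont hx
  have hB := hasDerivAt_integral_of_continuousOn_Ioo (f := fun s => s * f s)
    (hf.continuousOn_mul continuousOn_id) (continuousOn_id.mul hcont) hx
  have hK := ((hasDerivAt_id' x).mul hA).sub hB
  rw [one_mul, add_sub_cancel_right] at hK
  refine hK.congr_of_eventuallyEq ?_
  filter_upwards [Ioo_mem_nhds hx.1 hx.2] with t ht
  simp only [Pi.sub_apply, Pi.mul_apply]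
  have hat : IntervalIntegrable f volume a t :=
    hf.mono_set (uIcc_subset_uIcc left_mem_uIcc (Icc_subset_uIcc (Ioo_subset_Icc_self ht)))
  have hsf : IntervalIntegrable (fun s => s * f s) volume a t :=
    hat.continuousOn_mul continuousOn_id
  rw [← intervalIntegral.integral_const_mul, ← integral_sub (hat.const_mul t) hsf]
  simp only [sub_mul]

theorem hasDerivAt_deriv_of_eqOn_affine_sub_integral (hf : IntervalIntegrable f volume a b)
    (hcont : ContinuousOn f (Ioo a b)) {u : ℝ → ℝ} {c : ℝ}
    (hu : EqOn u (fun t => c * (t - a) - ∫ s in a..t, (t - s) * f s) (Ioo a b))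
    {x : ℝ} (hx : x ∈ Ioo a b) :
    HasDerivAt (deriv u) (-f x) x := by
  have hu_deriv : ∀ z ∈ Ioo a b, HasDerivAt u (c - ∫ s in a..z, f s) z := fun z hz => by
    have h := (((hasDerivAt_id' z).sub_const a).const_mul c).sub
      (hasDerivAt_integral_sub_mul hf hcont hz)
    rw [mul_one] at h
    refine h.congr_of_eventuallyEq ?_
    filter_upwards [Ioo_mem_nhds hz.1 hz.2] with t ht using hu ht
  refine ((hasDerivAt_integral_of_continuousOn_Ioo hf hcont hx).const_sub c).congr_of_eventuallyEq
    ?_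
  filter_upwards [Ioo_mem_nhds hx.1 hx.2] with z hz using (hu_deriv z hz).deriv

end

theorem green_representation_solves_problem_general
    (a b α : ℝ) (hab : a < b) (hα1 : 1 < α)
    (y : ℝ → ℝ) (hy : ContinuousOn y (Set.Icc a b))
    (G : ℝ → ℝ → ℝ)
    (hG1 : ∀ t s : ℝ, s ≤ t →
      G t s = (1 / (b - a)) * (-(b - a) * (t - s) + (b - s) * (t - a)))
    (hG2 : ∀ t s : ℝ, t < s → G t s = (1 / (b - a)) * ((b - s) * (t - a)))
    (u : ℝ → ℝ)
    (hu : ∀ t : ℝ, u t = ∫ s in a..b, G t s * y s * (s - a) ^ (α - 2)) :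
    u a = 0 ∧ u b = 0 ∧
      ∀ t ∈ Set.Ioo a b, ∃ L : ℝ, HasDerivAt (deriv u) L t ∧
        (t - a) ^ (2 - α) * L + y t = 0 := by
  set f : ℝ → ℝ := fun s => y s * (s - a) ^ (α - 2) with hf_def
  have hf : IntervalIntegrable f volume a b :=
    intervalIntegrable_mul_rpow_sub hab.le hy (by linarith)
  have hcont : ContinuousOn f (Ioo a b) :=
    (hy.mono Ioo_subset_Icc_self).mul
      (ContinuousOn.rpow_const (by fun_prop) fun s hs => Or.inl (sub_ne_zero.mpr hs.1.ne'))
  have hrep : ∀ t ∈ Icc a b, u t =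
      (∫ s in a..b, (b - s) * f s) / (b - a) * (t - a) - ∫ s in a..t, (t - s) * f s :=
    fun t ht => by
      rw [hu, eq_greenFun hab.ne hG1 hG2, ← integral_greenFun_mul hf ht]
      simp only [hf_def, mul_assoc]
  refine ⟨?_, ?_, fun t ht => ⟨-f t, hasDerivAt_deriv_of_eqOn_affine_sub_integral hf hcont
    (fun z hz => hrep z (Ioo_subset_Icc_self hz)) ht, ?_⟩⟩
  · simp [hrep a ⟨le_rfl, hab.le⟩]
  · rw [hrep b ⟨hab.le, le_rfl⟩, div_mul_cancel₀ _ (sub_ne_zero.mpr hab.ne'), sub_self]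
  · have hcancel : (t - a) ^ (2 - α) * (t - a) ^ (α - 2) = 1 := by
      rw [← Real.rpow_add (sub_pos.mpr ht.1)]
      norm_num
    linear_combination (-y t) * hcancel

/-- The Green-function representation `u(t) = ∫_a^b G(t,s) y(s) (s-a)^(α-2) ds`
solves the conformable Dirichlet problem: `u(a) = u(b) = 0` and, for every
`t ∈ (a, b)`, the second derivative `u''(t)` exists and
`(t-a)^(2-α) u''(t) + y(t) = 0`. -/
theorem green_representation_solves_problem
    (a b α : ℝ) (hab : a < b) (hα1 : 1 < α) (hα2 : α < 2)
    (y : ℝ → ℝ) (hy : ContinuousOn y (Set.Icc a b))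
    (G : ℝ → ℝ → ℝ)
    (hG1 : ∀ t s : ℝ, s ≤ t →
      G t s = (1 / (b - a)) * (-(b - a) * (t - s) + (b - s) * (t - a)))
    (hG2 : ∀ t s : ℝ, t < s → G t s = (1 / (b - a)) * ((b - s) * (t - a)))
    (u : ℝ → ℝ)
    (hu : ∀ t : ℝ, u t = ∫ s in a..b, G t s * y s * (s - a) ^ (α - 2)) :
    u a = 0 ∧ u b = 0 ∧
      ∀ t ∈ Set.Ioo a b, ∃ L : ℝ, HasDerivAt (deriv u) L t ∧
        (t - a) ^ (2 - α) * L + y t = 0 :=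
  green_representation_solves_problem_general a b α hab hα1 y hy G hG1 hG2 u hu
end

section
/- Let a < b be real numbers, 1 < α < 2, and let y : [a,b] → ℝ be continuous. Suppose u : [a,b] → ℝ is continuously differentiable with u' absolutely continuous on [a,b], u(a) = u(b) = 0, u twice differentiable on (a,b), and (t−a)^{2−α}·u''(t) + y(t) = 0 for all t ∈ (a,b). Then for every t ∈ [a,b], u(t) = −∫_a^t (t−s)·(s−a)^{α−2}·y(s) ds + ((t−a)/(b−a))·∫_a^b (b−s)·(s−a)^{α−2}·y(s) ds, i.e. u(t) = ∫_a^b G(t,s)·y(s)·(s−a)^{α−2} ds with G the Green function G(t,s) = (1/(b−a))·(−(b−a)(t−s) + (b−s)(t−a)) for a ≤ s ≤ t ≤ b and G(t,s) = (1/(b−a))·(b−s)(t−a) for a ≤ t < s ≤ b. In particular the boundary value problem T_α^a u + y = 0, u(a) = u(b) = 0 has a unique solution in this class. -/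
open Set MeasureTheory intervalIntegral

/-!
Since `u'' = -(t - a)^(α - 2) y` on `(a, b)`, Taylor's formula with integral remainder gives
`u t = (t - a) u'(a) - ∫ₐᵗ (t - s)(s - a)^(α - 2) y(s) ds`; the condition `u b = 0` then
determines `u'(a)`.
-/

theorem taylor_integral_remainder_two {u u' u'' : ℝ → ℝ} {a t : ℝ} (hat : a ≤ t)
    (hu : ContinuousOn u (Icc a t)) (hu' : ∀ s ∈ Ioo a t, HasDerivAt u (u' s) s)
    (hu'c : ContinuousOn u' (Icc a t)) (hu'' : ∀ s ∈ Ioo a t, HasDerivAt u' (u'' s) s)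
    (hint : IntervalIntegrable u'' volume a t) :
    u t = u a + (t - a) * u' a + ∫ s in a..t, (t - s) * u'' s := by
  -- `s ↦ (t - s) u'(s) + u(s)` is a primitive of `s ↦ (t - s) u''(s)`
  have hcont : ContinuousOn (fun s => (t - s) * u' s + u s) (Icc a t) :=
    ((continuousOn_const.sub continuousOn_id).mul hu'c).add hu
  have hderiv : ∀ s ∈ Ioo a t,
      HasDerivAt (fun s => (t - s) * u' s + u s) ((t - s) * u'' s) s := by
    intro s hs
    have hlin : HasDerivAt (fun s : ℝ => t - s) (-1) s := (hasDerivAt_id' s).const_sub t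
    exact ((hlin.mul (hu'' s hs)).add (hu' s hs)).congr_deriv (by ring)
  have hint' : IntervalIntegrable (fun s => (t - s) * u'' s) volume a t :=
    hint.continuousOn_mul (continuousOn_const.sub continuousOn_id)
  have hFTC := integral_eq_sub_of_hasDerivAt_of_le hat hcont hderiv hint'
  simp only [sub_self, zero_mul, zero_add] at hFTC
  linarith

theorem eq_neg_rpow_mul_of_rpow_mul_add_eq_zero {x v w α : ℝ} (hx : 0 < x)
    (h : x ^ (2 - α) * v + w = 0) : v = -(x ^ (α - 2) * w) := by
  have hinv : x ^ (α - 2) * x ^ (2 - α) = 1 := by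
    rw [← Real.rpow_add hx]; norm_num
  calc v = x ^ (α - 2) * (x ^ (2 - α) * v) := by rw [← mul_assoc, hinv, one_mul]
    _ = -(x ^ (α - 2) * w) := by rw [eq_neg_of_add_eq_zero_left h]; ring

theorem linear_problem_unique_solution_general
    (a b α : ℝ) (hab : a < b)
    (y u u' u'' : ℝ → ℝ)
    (hu' : ∀ t ∈ Set.Icc a b, HasDerivWithinAt u (u' t) (Set.Icc a b) t)
    (hu'cont : ContinuousOn u' (Set.Icc a b))
    (hint : IntervalIntegrable u'' volume a b)
    (hu'' : ∀ t ∈ Set.Ioo a b, HasDerivAt u' (u'' t) t)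
    (ha : u a = 0) (hb : u b = 0)
    (heq : ∀ t ∈ Set.Ioo a b, (t - a) ^ (2 - α) * u'' t + y t = 0) :
    ∀ t ∈ Set.Icc a b,
      u t = -(∫ s in a..t, (t - s) * (s - a) ^ (α - 2) * y s)
        + ((t - a) / (b - a)) * ∫ s in a..b, (b - s) * (s - a) ^ (α - 2) * y s := by
  have taylor : ∀ t ∈ Icc a b,
      u t = (t - a) * u' a - ∫ s in a..t, (t - s) * (s - a) ^ (α - 2) * y s := by
    intro t ⟨hat, htb⟩
    have hsub : Icc a t ⊆ Icc a b := Icc_subset_Icc_right htb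
    have hIoo : Ioo a t ⊆ Ioo a b := Ioo_subset_Ioo_right htb
    have hrem : (∫ s in a..t, (t - s) * u'' s)
        = -∫ s in a..t, (t - s) * (s - a) ^ (α - 2) * y s := by
      rw [← intervalIntegral.integral_neg]
      refine integral_congr_Ioo_of_le hat fun s hs => ?_
      rw [eq_neg_rpow_mul_of_rpow_mul_add_eq_zero (sub_pos.2 hs.1) (heq s (hIoo hs))]
      ring
    rw [taylor_integral_remainder_two hat
        (fun s hs => ((hu' s (hsub hs)).continuousWithinAt).mono hsub)
        (fun s hs => (hu' s (Ioo_subset_Icc_self (hIoo hs))).hasDerivAt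
          (Icc_mem_nhds (hIoo hs).1 (hIoo hs).2))
        (hu'cont.mono hsub) (fun s hs => hu'' s (hIoo hs))
        (hint.mono_set (by rw [uIcc_of_le hat, uIcc_of_le hab.le]; exact hsub)),
      hrem, ha]
    ring
  have hu'a : u' a = (∫ s in a..b, (b - s) * (s - a) ^ (α - 2) * y s) / (b - a) := by
    have := taylor b ⟨hab.le, le_rfl⟩
    rw [hb] at this
    field_simp [(sub_pos.2 hab).ne']
    linarith
  intro t ht
  rw [taylor t ht, hu'a]
  ring

/-- Uniqueness of the solution of the linear conformable Dirichlet problem: any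
solution `u ∈ AC²[a,b]` (i.e. `u` is `C¹` with `u'` absolutely continuous, encoded
via the fundamental theorem of calculus for `u''`) of
`(t-a)^(2-α) u''(t) + y(t) = 0`, `u(a) = u(b) = 0` is given by the Green-function
formula. -/
theorem linear_problem_unique_solution
    (a b α : ℝ) (hab : a < b) (hα1 : 1 < α) (hα2 : α < 2)
    (y u u' u'' : ℝ → ℝ)
    (hy : ContinuousOn y (Set.Icc a b))
    (hu' : ∀ t ∈ Set.Icc a b, HasDerivWithinAt u (u' t) (Set.Icc a b) t)
    (hu'cont : ContinuousOn u' (Set.Icc a b))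
    (hint : IntervalIntegrable u'' volume a b)
    (hFTC : ∀ c ∈ Set.Icc a b, ∀ d ∈ Set.Icc a b, u' d - u' c = ∫ s in c..d, u'' s)
    (hu'' : ∀ t ∈ Set.Ioo a b, HasDerivAt u' (u'' t) t)
    (ha : u a = 0) (hb : u b = 0)
    (heq : ∀ t ∈ Set.Ioo a b, (t - a) ^ (2 - α) * u'' t + y t = 0) :
    ∀ t ∈ Set.Icc a b,
      u t = -(∫ s in a..t, (t - s) * (s - a) ^ (α - 2) * y s)
        + ((t - a) / (b - a)) * ∫ s in a..b, (b - s) * (s - a) ^ (α - 2) * y s :=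
  linear_problem_unique_solution_general a b α hab y u u' u'' hu' hu'cont hint hu'' ha hb heq
end

section
/- Let a < b be real numbers, 1 < α < 2, and let q : [a,b] → ℝ be continuous. Suppose u : [a,b] → ℝ is continuously differentiable with u' absolutely continuous on [a,b], twice differentiable on (a,b), u(a) = u(b) = 0, u(t) ≠ 0 for almost every t ∈ (a,b), and (t−a)^{2−α}·u''(t) + q(t)·u(t) = 0 for all t ∈ (a,b). Then ∫_a^b |q(s)|·(s−a)^{α−2} ds ≥ 4/(b−a). -/
/-!
Let `c` be a maximum point of `|u|` on `[a, b]` and `M = |u c|`, which is positive since `u` does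
not vanish a.e. Integrating `(τ - a) u''` over `[a, c]` and `(b - τ) u''` over `[c, b]` and
using `u a = u b = 0` (the Green's function of `-d²/dt²` with Dirichlet conditions) gives
`(b - a) |u c| ≤ (b - c) (c - a) ∫ₐᵇ |u''| ≤ (b - a)² / 4 · ∫ₐᵇ |u''|`.
The equation gives `|u''(s)| ≤ M |q s| (s - a)^(α - 2)`,
so `4 M ≤ (b - a) M ∫ₐᵇ |q s| (s - a)^(α - 2) ds`.
-/

open Set MeasureTheory intervalIntegral

section SecondDerivative

variable {a b : ℝ} {u u' u'' : ℝ → ℝ}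

theorem integral_sub_mul_secondDeriv_eq (p : ℝ) (hab : a ≤ b)
    (hu : ContinuousOn u (Icc a b)) (hu' : ContinuousOn u' (Icc a b))
    (hderiv : ∀ t ∈ Ioo a b, HasDerivAt u (u' t) t)
    (hderiv2 : ∀ t ∈ Ioo a b, HasDerivAt u' (u'' t) t)
    (hint : IntervalIntegrable u'' volume a b) :
    ∫ τ in a..b, (τ - p) * u'' τ = ((b - p) * u' b - u b) - ((a - p) * u' a - u a) := by
  refine integral_eq_sub_of_hasDerivAt_of_le hab
    (((continuous_id.sub continuous_const).continuousOn.mul hu').sub hu) (fun t ht => ?_)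
    (hint.continuousOn_mul (continuous_id.sub continuous_const).continuousOn)
  have h := (((hasDerivAt_id t).sub_const p).mul (hderiv2 t ht)).sub (hderiv t ht)
  simp only [id_eq] at h
  exact h.congr_deriv (by ring)

theorem abs_integral_mul_le_mul_integral_abs {w g : ℝ → ℝ} {K : ℝ} (hab : a ≤ b)
    (hg : IntervalIntegrable g volume a b) (hw : ∀ τ ∈ Ioc a b, |w τ| ≤ K) :
    |∫ τ in a..b, w τ * g τ| ≤ K * ∫ τ in a..b, |g τ| := by
  rw [← intervalIntegral.integral_const_mul]
  refine (Real.norm_eq_abs _).symm.trans_le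
    (norm_integral_le_of_norm_le hab (ae_of_all _ fun τ hτ => ?_) (hg.abs.const_mul K))
  rw [Real.norm_eq_abs, abs_mul]
  exact mul_le_mul_of_nonneg_right (hw τ hτ) (abs_nonneg _)

variable (hu : ContinuousOn u (Icc a b)) (hu' : ContinuousOn u' (Icc a b))
    (hderiv : ∀ t ∈ Ioo a b, HasDerivAt u (u' t) t)
    (hderiv2 : ∀ t ∈ Ioo a b, HasDerivAt u' (u'' t) t)
    (hint : IntervalIntegrable u'' volume a b)
include hu hu' hderiv hderiv2 hint

theorem sub_mul_abs_le_mul_integral_abs_secondDeriv (ha : u a = 0) (hb : u b = 0)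
    {c : ℝ} (hc : c ∈ Icc a b) :
    (b - a) * |u c| ≤ (b - c) * (c - a) * ∫ τ in a..b, |u'' τ| := by
  obtain ⟨hac, hcb⟩ := hc
  have hint_ac : IntervalIntegrable u'' volume a c :=
    hint.mono_set (uIcc_subset_uIcc left_mem_uIcc (mem_uIcc_of_le hac hcb))
  have hint_cb : IntervalIntegrable u'' volume c b :=
    hint.mono_set (uIcc_subset_uIcc (mem_uIcc_of_le hac hcb) right_mem_uIcc)
  have hleft := integral_sub_mul_secondDeriv_eq a hac
    (hu.mono (Icc_subset_Icc le_rfl hcb)) (hu'.mono (Icc_subset_Icc le_rfl hcb))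
    (fun t ht => hderiv t ⟨ht.1, ht.2.trans_le hcb⟩)
    (fun t ht => hderiv2 t ⟨ht.1, ht.2.trans_le hcb⟩) hint_ac
  have hright := integral_sub_mul_secondDeriv_eq b hcb
    (hu.mono (Icc_subset_Icc hac le_rfl)) (hu'.mono (Icc_subset_Icc hac le_rfl))
    (fun t ht => hderiv t ⟨hac.trans_lt ht.1, ht.2⟩)
    (fun t ht => hderiv2 t ⟨hac.trans_lt ht.1, ht.2⟩) hint_cb
  have hbound_left : |∫ τ in a..c, (τ - a) * u'' τ| ≤ (c - a) * ∫ τ in a..c, |u'' τ| :=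
    abs_integral_mul_le_mul_integral_abs hac hint_ac fun τ hτ => by
      rw [abs_of_pos (sub_pos.2 hτ.1)]; linarith [hτ.2]
  have hbound_right : |∫ τ in c..b, (τ - b) * u'' τ| ≤ (b - c) * ∫ τ in c..b, |u'' τ| :=
    abs_integral_mul_le_mul_integral_abs hcb hint_cb fun τ hτ => by
      rw [abs_of_nonpos (sub_nonpos.2 hτ.2)]; linarith [hτ.1]
  have hrepr : (b - a) * u c = (c - a) * (∫ τ in c..b, (τ - b) * u'' τ)
      - (b - c) * ∫ τ in a..c, (τ - a) * u'' τ := by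
    linear_combination (b - c) * hleft - (c - a) * hright + (b - c) * ha + (c - a) * hb
  calc (b - a) * |u c| = |(b - a) * u c| := by
        rw [abs_mul, abs_of_nonneg (sub_nonneg.2 (hac.trans hcb))]
    _ ≤ (c - a) * |∫ τ in c..b, (τ - b) * u'' τ|
          + (b - c) * |∫ τ in a..c, (τ - a) * u'' τ| := by
        rw [hrepr, ← abs_of_nonneg (sub_nonneg.2 hac), ← abs_of_nonneg (sub_nonneg.2 hcb)]
        refine (abs_sub _ _).trans_eq ?_
        rw [abs_mul, abs_mul, abs_abs, abs_abs]
    _ ≤ (c - a) * ((b - c) * ∫ τ in c..b, |u'' τ|)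
          + (b - c) * ((c - a) * ∫ τ in a..c, |u'' τ|) := by
        gcongr
    _ = (b - c) * (c - a) * ∫ τ in a..b, |u'' τ| := by
        rw [← integral_add_adjacent_intervals hint_ac.abs hint_cb.abs]; ring

theorem four_mul_abs_le_integral_abs_secondDeriv (hab : a < b) (ha : u a = 0) (hb : u b = 0)
    {c : ℝ} (hc : c ∈ Icc a b) :
    4 * |u c| ≤ (b - a) * ∫ τ in a..b, |u'' τ| := by
  have hgreen :=
    sub_mul_abs_le_mul_integral_abs_secondDeriv hu hu' hderiv hderiv2 hint ha hb hc
  have hnonneg : 0 ≤ ∫ τ in a..b, |u'' τ| := integral_nonneg hab.le fun _ _ => abs_nonneg _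
  have hprod : (b - c) * (c - a) ≤ (b - a) ^ 2 / 4 := by nlinarith [sq_nonneg (b + a - 2 * c)]
  nlinarith [mul_le_mul_of_nonneg_right hprod hnonneg]

end SecondDerivative

theorem intervalIntegrable_mul_sub_rpow {f : ℝ → ℝ} {a b r : ℝ}
    (hf : ContinuousOn f (uIcc a b)) (hr : -1 < r) :
    IntervalIntegrable (fun s => f s * (s - a) ^ r) volume a b := by
  have h := (intervalIntegrable_rpow' (a := 0) (b := b - a) hr).comp_sub_right a
  simp only [zero_add, sub_add_cancel] at h
  exact h.continuousOn_mul hf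

theorem exists_mem_Ioo_of_ae_restrict_Ioo {a b : ℝ} {p : ℝ → Prop} (hab : a < b)
    (h : ∀ᵐ t ∂volume.restrict (Ioo a b), p t) : ∃ t ∈ Ioo a b, p t := by
  have := ae_restrict_neBot.2 (by simpa [Real.volume_Ioo] using hab : volume (Ioo a b) ≠ 0)
  obtain ⟨t, hpt, ht⟩ := (h.and (ae_restrict_mem measurableSet_Ioo)).exists
  exact ⟨t, ht, hpt⟩

theorem abs_le_of_rpow_mul_add_mul_eq_zero {x α v q w M : ℝ} (hx : 0 < x)
    (h : x ^ (2 - α) * v + q * w = 0) (hw : |w| ≤ M) : |v| ≤ M * (|q| * x ^ (α - 2)) := by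
  have hv : v = -(q * w) * x ^ (α - 2) := by
    rw [← eq_neg_iff_add_eq_zero.2 h, mul_comm, ← mul_assoc, ← Real.rpow_add hx]
    simp
  rw [hv, abs_mul, abs_neg, abs_mul, abs_of_nonneg (Real.rpow_nonneg hx.le _),
    mul_comm |q|, mul_assoc]
  exact mul_le_mul_of_nonneg_right hw (mul_nonneg (abs_nonneg _) (Real.rpow_nonneg hx.le _))

theorem lyapunov_inequality_conformable_general
    (a b α : ℝ) (hab : a < b) (hα1 : 1 < α)
    (q u u' u'' : ℝ → ℝ)
    (hq : ContinuousOn q (Set.Icc a b))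
    (hu' : ∀ t ∈ Set.Icc a b, HasDerivWithinAt u (u' t) (Set.Icc a b) t)
    (hu'cont : ContinuousOn u' (Set.Icc a b))
    (hint : IntervalIntegrable u'' volume a b)
    (hu'' : ∀ t ∈ Set.Ioo a b, HasDerivAt u' (u'' t) t)
    (ha : u a = 0) (hb : u b = 0)
    (hne : ∀ᵐ t ∂(volume.restrict (Set.Ioo a b)), u t ≠ 0)
    (heq : ∀ t ∈ Set.Ioo a b, (t - a) ^ (2 - α) * u'' t + q t * u t = 0) :
    4 / (b - a) ≤ ∫ s in a..b, |q s| * (s - a) ^ (α - 2) := by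
  have hucont : ContinuousOn u (Icc a b) := fun t ht => (hu' t ht).continuousWithinAt
  have hderiv : ∀ t ∈ Ioo a b, HasDerivAt u (u' t) t := fun t ht =>
    (hu' t (Ioo_subset_Icc_self ht)).hasDerivAt (Icc_mem_nhds ht.1 ht.2)
  obtain ⟨c, hc, hmax⟩ := isCompact_Icc.exists_isMaxOn (nonempty_Icc.2 hab.le) hucont.abs
  have hM : 0 < |u c| := by
    obtain ⟨t, ht, hut⟩ := exists_mem_Ioo_of_ae_restrict_Ioo hab hne
    exact (abs_pos.2 hut).trans_le (hmax (Ioo_subset_Icc_self ht))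
  have hpointwise : ∀ t ∈ Ioo a b, |u'' t| ≤ |u c| * (|q t| * (t - a) ^ (α - 2)) :=
    fun t ht => abs_le_of_rpow_mul_add_mul_eq_zero (sub_pos.2 ht.1) (heq t ht)
      (hmax (Ioo_subset_Icc_self ht))
  have hweight : IntervalIntegrable (fun s => |q s| * (s - a) ^ (α - 2)) volume a b :=
    intervalIntegrable_mul_sub_rpow (by rw [uIcc_of_le hab.le]; exact hq.abs) (by linarith)
  have hintegral :
      ∫ τ in a..b, |u'' τ| ≤ |u c| * ∫ s in a..b, |q s| * (s - a) ^ (α - 2) := by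
    rw [← intervalIntegral.integral_const_mul]
    exact integral_mono_on_of_le_Ioo hab.le hint.abs (hweight.const_mul _) hpointwise
  rw [div_le_iff₀ (sub_pos.2 hab)]
  refine le_of_mul_le_mul_left ?_ hM
  calc |u c| * 4 ≤ (b - a) * ∫ τ in a..b, |u'' τ| := by
        rw [mul_comm]
        exact four_mul_abs_le_integral_abs_secondDeriv hucont hu'cont hderiv hu'' hint
          hab ha hb hc
    _ ≤ (b - a) * (|u c| * ∫ s in a..b, |q s| * (s - a) ^ (α - 2)) :=
        mul_le_mul_of_nonneg_left hintegral (sub_pos.2 hab).le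
    _ = |u c| * ((∫ s in a..b, |q s| * (s - a) ^ (α - 2)) * (b - a)) := by ring

/-- Lyapunov-type inequality for the conformable Dirichlet problem: if
`(t-a)^(2-α) u'' + q u = 0` on `(a,b)` has a nontrivial solution
`u ∈ AC²[a,b]` (C¹ with `u'` absolutely continuous, encoded via the FTC for
`u''`) with `u(a) = u(b) = 0` and `u ≠ 0` a.e. on `(a,b)`, then
`∫_a^b |q(s)| (s-a)^(α-2) ds ≥ 4/(b-a)`. -/
theorem lyapunov_inequality_conformable
    (a b α : ℝ) (hab : a < b) (hα1 : 1 < α) (hα2 : α < 2)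
    (q u u' u'' : ℝ → ℝ)
    (hq : ContinuousOn q (Set.Icc a b))
    (hu' : ∀ t ∈ Set.Icc a b, HasDerivWithinAt u (u' t) (Set.Icc a b) t)
    (hu'cont : ContinuousOn u' (Set.Icc a b))
    (hint : IntervalIntegrable u'' volume a b)
    (hFTC : ∀ c ∈ Set.Icc a b, ∀ d ∈ Set.Icc a b, u' d - u' c = ∫ s in c..d, u'' s)
    (hu'' : ∀ t ∈ Set.Ioo a b, HasDerivAt u' (u'' t) t)
    (ha : u a = 0) (hb : u b = 0)
    (hne : ∀ᵐ t ∂(volume.restrict (Set.Ioo a b)), u t ≠ 0)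
    (heq : ∀ t ∈ Set.Ioo a b, (t - a) ^ (2 - α) * u'' t + q t * u t = 0) :
    4 / (b - a) ≤ ∫ s in a..b, |q s| * (s - a) ^ (α - 2) :=
  lyapunov_inequality_conformable_general a b α hab hα1 q u u' u'' hq hu' hu'cont hint hu'' ha hb
    hne heq
end

section
/- Let a < b be real numbers and let u : [a,b] → ℝ be continuously differentiable with u' absolutely continuous on [a,b] (so u'' exists almost everywhere and u'(d) − u'(c) = ∫_c^d u''(s) ds for a ≤ c ≤ d ≤ b), with u(a) = u(b) = 0. Let ξ ∈ (a,b) be a point where |u| attains its maximum over [a,b], i.e. |u(ξ)| = ‖u‖ := max_{t ∈ [a,b]} |u(t)|, and assume ‖u‖ > 0. Then ∫_a^b |u''(s)| ds ≥ ‖u‖ · (1/(b−ξ) + 1/(ξ−a)). -/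
open Set Filter Topology MeasureTheory intervalIntegral

/-- Borg-type estimate: if `u ∈ AC²[a,b]` (C¹ with `u'` absolutely continuous,
encoded via the FTC for `u''`), `u(a) = u(b) = 0`, and `|u|` attains its
positive maximum `‖u‖ = |u(ξ)|` at `ξ ∈ (a,b)`, then
`∫_a^b |u''| ≥ ‖u‖ (1/(b-ξ) + 1/(ξ-a))`. -/
theorem borg_estimate_at_max_point
    (a b : ℝ) (hab : a < b)
    (u u' u'' : ℝ → ℝ)
    (hu' : ∀ t ∈ Set.Icc a b, HasDerivWithinAt u (u' t) (Set.Icc a b) t)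
    (hu'cont : ContinuousOn u' (Set.Icc a b))
    (hint : IntervalIntegrable u'' volume a b)
    (hFTC : ∀ c d : ℝ, a ≤ c → c ≤ d → d ≤ b → u' d - u' c = ∫ s in c..d, u'' s)
    (ha : u a = 0) (hb : u b = 0)
    (ξ : ℝ) (hξ : ξ ∈ Set.Ioo a b)
    (hmax : ∀ t ∈ Set.Icc a b, |u t| ≤ |u ξ|)
    (hpos : 0 < |u ξ|) :
    |u ξ| * (1 / (b - ξ) + 1 / (ξ - a)) ≤ ∫ s in a..b, |u'' s| := by
  obtain ⟨hξa, hξb⟩ := hξ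
  have hξmem : ξ ∈ Set.Icc a b := ⟨hξa.le, hξb.le⟩
  have hucont : ContinuousOn u (Set.Icc a b) := fun t ht =>
    (hu' t ht).continuousWithinAt
  have hnhds : Set.Icc a b ∈ 𝓝 ξ := Icc_mem_nhds hξa hξb
  -- derivative at interior points
  have hderiv : ∀ t ∈ Set.Ioo a b, HasDerivAt u (u' t) t := fun t ht =>
    (hu' t ⟨ht.1.le, ht.2.le⟩).hasDerivAt (Icc_mem_nhds ht.1 ht.2)
  -- u'(ξ) = 0
  have huξ0 : u' ξ = 0 := by
    have hdξ : HasDerivAt u (u' ξ) ξ := hderiv ξ ⟨hξa, hξb⟩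
    rcases lt_or_gt_of_ne (fun h : u ξ = 0 => by simp [h] at hpos) with hneg | hposu
    · have hmin : IsLocalMin u ξ := by
        filter_upwards [hnhds] with t ht
        have := hmax t ht
        have : -(u t) ≤ -(u ξ) := by
          calc -(u t) ≤ |u t| := neg_le_abs _
          _ ≤ |u ξ| := hmax t ht
          _ = -(u ξ) := abs_of_neg hneg
        linarith
      exact hmin.hasDerivAt_eq_zero hdξ
    · have hmx : IsLocalMax u ξ := by
        filter_upwards [hnhds] with t ht
        calc u t ≤ |u t| := le_abs_self _
        _ ≤ |u ξ| := hmax t ht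
        _ = u ξ := abs_of_pos hposu
      exact hmx.hasDerivAt_eq_zero hdξ
  -- MVT on [a, ξ]
  obtain ⟨c, hc, hcval⟩ := exists_hasDerivAt_eq_slope u u' hξa
    (hucont.mono (Set.Icc_subset_Icc le_rfl hξb.le))
    (fun x hx => hderiv x ⟨hx.1, hx.2.trans hξb⟩)
  -- MVT on [ξ, b]
  obtain ⟨d, hd, hdval⟩ := exists_hasDerivAt_eq_slope u u' hξb
    (hucont.mono (Set.Icc_subset_Icc hξa.le le_rfl))
    (fun x hx => hderiv x ⟨hξa.trans hx.1, hx.2⟩)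
  have hcval' : u' c = u ξ / (ξ - a) := by rw [hcval, ha]; ring_nf
  have hdval' : u' d = -u ξ / (b - ξ) := by rw [hdval, hb]; ring_nf
  have habs : IntervalIntegrable (fun s => |u'' s|) volume a b := hint.abs
  -- first piece
  have h1 : |u ξ| / (ξ - a) ≤ ∫ s in c..ξ, |u'' s| := by
    have hF := hFTC c ξ hc.1.le hc.2.le hξb.le
    have : |u ξ| / (ξ - a) = |∫ s in c..ξ, u'' s| := by
      rw [← hF, huξ0, zero_sub, abs_neg, hcval', abs_div,
        abs_of_pos (by linarith : (0:ℝ) < ξ - a)]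
    rw [this]
    exact intervalIntegral.abs_integral_le_integral_abs hc.2.le
  have h2 : |u ξ| / (b - ξ) ≤ ∫ s in ξ..d, |u'' s| := by
    have hF := hFTC ξ d hξa.le hd.1.le hd.2.le
    have : |u ξ| / (b - ξ) = |∫ s in ξ..d, u'' s| := by
      rw [← hF, huξ0, sub_zero, hdval', abs_div, abs_neg,
        abs_of_pos (by linarith : (0:ℝ) < b - ξ)]
    rw [this]
    exact intervalIntegral.abs_integral_le_integral_abs hd.1.le
  have hi1 : IntervalIntegrable (fun s => |u'' s|) volume c ξ :=
    habs.mono_set (Set.uIcc_subset_uIcc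
      (by rw [Set.uIcc_of_le hab.le]; exact ⟨hc.1.le, hc.2.le.trans hξb.le⟩)
      (by rw [Set.uIcc_of_le hab.le]; exact hξmem))
  have hi2 : IntervalIntegrable (fun s => |u'' s|) volume ξ d :=
    habs.mono_set (Set.uIcc_subset_uIcc
      (by rw [Set.uIcc_of_le hab.le]; exact hξmem)
      (by rw [Set.uIcc_of_le hab.le]; exact ⟨hξa.le.trans hd.1.le, hd.2.le⟩))
  have hsum : (∫ s in c..ξ, |u'' s|) + (∫ s in ξ..d, |u'' s|) = ∫ s in c..d, |u'' s| :=
    intervalIntegral.integral_add_adjacent_intervals hi1 hi2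
  have hmono : (∫ s in c..d, |u'' s|) ≤ ∫ s in a..b, |u'' s| := by
    apply intervalIntegral.integral_mono_interval (a := c) (b := d)
      hc.1.le (hc.2.le.trans hd.1.le) hd.2.le
    · filter_upwards with s using abs_nonneg _
    · exact habs
  have : |u ξ| * (1 / (b - ξ) + 1 / (ξ - a)) = |u ξ| / (ξ - a) + |u ξ| / (b - ξ) := by
    ring
  linarith
end

section
/- Let a < b be real numbers and let u : [a,b] → ℝ be continuously differentiable with u' absolutely continuous on [a,b], with u(a) = u(b) = 0 and u not identically zero on [a,b]. Then ∫_a^b |u''(s)| ds ≥ (4/(b−a)) · ‖u‖, where ‖u‖ = max_{t ∈ [a,b]} |u(t)|. -/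
open Set Filter Topology MeasureTheory intervalIntegral

/-- Borg's version of the Lyapunov inequality: if `u ∈ AC²[a,b]` (C¹ with `u'`
absolutely continuous, encoded via the FTC for `u''`), `u(a) = u(b) = 0`, and
`u` is not identically zero on `[a,b]`, then
`∫_a^b |u''| ≥ (4/(b-a)) ‖u‖` where `‖u‖ = max_{t ∈ [a,b]} |u(t)|`. -/
theorem borg_lyapunov_inequality
    (a b : ℝ) (hab : a < b)
    (u u' u'' : ℝ → ℝ)
    (hu' : ∀ t ∈ Set.Icc a b, HasDerivWithinAt u (u' t) (Set.Icc a b) t)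
    (hu'cont : ContinuousOn u' (Set.Icc a b))
    (hint : IntervalIntegrable u'' volume a b)
    (hFTC : ∀ c d : ℝ, a ≤ c → c ≤ d → d ≤ b → u' d - u' c = ∫ s in c..d, u'' s)
    (ha : u a = 0) (hb : u b = 0)
    (hne : ∃ t ∈ Set.Icc a b, u t ≠ 0) :
    (4 / (b - a)) * (⨆ t : Set.Icc a b, |u (t : ℝ)|) ≤ ∫ s in a..b, |u'' s| := by
  have hcont : ContinuousOn u (Set.Icc a b) := fun t ht => (hu' t ht).continuousWithinAt
  obtain ⟨c, hc, hmax⟩ :=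
    isCompact_Icc.exists_isMaxOn ⟨a, left_mem_Icc.2 hab.le⟩
      (continuous_abs.comp_continuousOn hcont)
  have hM0 : 0 < |u c| := by
    obtain ⟨t, ht, htne⟩ := hne
    exact lt_of_lt_of_le (abs_pos.2 htne) (hmax ht)
  haveI : Nonempty (Set.Icc a b) := (Set.nonempty_Icc.2 hab.le).to_subtype
  have hsup : (⨆ t : Set.Icc a b, |u (t : ℝ)|) ≤ |u c| :=
    ciSup_le fun t => hmax t.2
  have hac : a < c := lt_of_le_of_ne hc.1 (by rintro rfl; simp [ha] at hM0)
  have hcb : c < b := lt_of_le_of_ne hc.2 (by rintro rfl; simp [hb] at hM0)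
  -- MVT on [a,c]
  obtain ⟨ξ₁, hξ₁, hd1⟩ := exists_hasDerivAt_eq_slope u u' hac
    (hcont.mono (Icc_subset_Icc le_rfl hc.2))
    (fun x hx => (hu' x ⟨hx.1.le, hx.2.le.trans hc.2⟩).hasDerivAt
      (Icc_mem_nhds hx.1 (hx.2.trans_le hc.2)))
  -- MVT on [c,b]
  obtain ⟨ξ₂, hξ₂, hd2⟩ := exists_hasDerivAt_eq_slope u u' hcb
    (hcont.mono (Icc_subset_Icc hc.1 le_rfl))
    (fun x hx => (hu' x ⟨hc.1.trans hx.1.le, hx.2.le⟩).hasDerivAt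
      (Icc_mem_nhds (hac.trans_le hx.1.le) hx.2))
  have hpa : (0:ℝ) < c - a := by linarith [hξ₁.1, hξ₁.2]
  have hpb : (0:ℝ) < b - c := by linarith
  have hFTCν : u' ξ₂ - u' ξ₁ = ∫ s in ξ₁..ξ₂, u'' s :=
    hFTC ξ₁ ξ₂ hξ₁.1.le (le_of_lt (hξ₁.2.trans hξ₂.1)) hξ₂.2.le
  have hval : |u' ξ₂ - u' ξ₁| = |u c| * (1 / (c - a) + 1 / (b - c)) := by
    rw [hd1, hd2, ha, hb]
    rw [show (0 - u c) / (b - c) - (u c - 0) / (c - a)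
        = -(u c * (1 / (c - a) + 1 / (b - c))) by field_simp; ring]
    rw [abs_neg, abs_mul, abs_of_pos (show (0:ℝ) < 1/(c-a)+1/(b-c) by positivity)]
  have hineq : 4 / (b - a) ≤ 1 / (c - a) + 1 / (b - c) := by
    rw [div_add_div _ _ hpa.ne' hpb.ne', div_le_div_iff₀ (by linarith) (by positivity)]
    nlinarith [sq_nonneg (c - a - (b - c))]
  have step1 : |u' ξ₂ - u' ξ₁| ≤ ∫ s in ξ₁..ξ₂, |u'' s| := by
    rw [hFTCν]
    exact intervalIntegral.abs_integral_le_integral_abs (le_of_lt (hξ₁.2.trans hξ₂.1))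
  have step2 : (∫ s in ξ₁..ξ₂, |u'' s|) ≤ ∫ s in a..b, |u'' s| := by
    apply intervalIntegral.integral_mono_interval hξ₁.1.le
      (le_of_lt (hξ₁.2.trans hξ₂.1)) hξ₂.2.le
    · filter_upwards with x using abs_nonneg _
    · exact hint.abs
  calc (4 / (b - a)) * (⨆ t : Set.Icc a b, |u (t : ℝ)|)
      ≤ (4 / (b - a)) * |u c| := by
        apply mul_le_mul_of_nonneg_left hsup (div_nonneg (by norm_num) (by linarith))
    _ ≤ |u c| * (1 / (c - a) + 1 / (b - c)) := by
        rw [mul_comm]; exact mul_le_mul_of_nonneg_left hineq hM0.le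
    _ = |u' ξ₂ - u' ξ₁| := hval.symm
    _ ≤ ∫ s in ξ₁..ξ₂, |u'' s| := step1
    _ ≤ ∫ s in a..b, |u'' s| := step2
end
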